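/- arXiv:1509.07171 — 3 statements merged into one kernel-verified Lean document; each statement's English description precedes it below -/
import Mathlib

section
/- There is a (non-full) subcategory D of the category of semigroups in C whose objects are the non-degenerate semigroups with multiplication in Q, and whose morphisms f : A → B are those semigroup morphisms for which the induced M-morphism f^# (with components m∘(f⊗1) and m∘(1⊗f)) has both components in Q; and the assignment f ↦ f^# is a faithful identity-on-objects functor D → M which is moreover full on isomorphisms: every isomorphism in M between objects of D is of the form f^# for a semigroup isomorphism f. -/
open CategoryTheory Category MonoidalCategory Limits

universe v u

variable {C : Type u} [Category.{v} C] [MonoidalCategory C]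

/-- A semigroup multiplication is non-degenerate. -/
def NonDeg (A : C) (m : A ⊗ A ⟶ A) : Prop :=
  (∀ X Y : C, Function.Injective (fun f : X ⟶ Y ⊗ A =>
      (f ▷ A) ≫ (α_ Y A A).hom ≫ (Y ◁ m))) ∧
  (∀ X Y : C, Function.Injective (fun g : X ⟶ A ⊗ Y =>
      (A ◁ g) ≫ (α_ A A Y).inv ≫ (m ▷ Y)))

/-- Associativity of a semigroup multiplication. -/
def SgAssoc (A : C) (m : A ⊗ A ⟶ A) : Prop :=
  (m ▷ A) ≫ m = (α_ A A A).hom ≫ (A ◁ m) ≫ m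

/-- A pair (f₁, f₂) is an `𝕄`-morphism `A ⇸ B`: eq. (2). -/
def IsMMor {A B : C} (mB : B ⊗ B ⟶ B) (f₁ : A ⊗ B ⟶ B) (f₂ : B ⊗ A ⟶ B) : Prop :=
  (f₂ ▷ B) ≫ mB = (α_ B A B).hom ≫ (B ◁ f₁) ≫ mB

/-- The first component of an `𝕄`-morphism is multiplicative. -/
def Mult₁ {A B : C} (mA : A ⊗ A ⟶ A) (f₁ : A ⊗ B ⟶ B) : Prop :=
  (mA ▷ B) ≫ f₁ = (α_ A A B).hom ≫ (A ◁ f₁) ≫ f₁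

/-- The second component of an `𝕄`-morphism is multiplicative. -/
def Mult₂ {A B : C} (mA : A ⊗ A ⟶ A) (f₂ : B ⊗ A ⟶ B) : Prop :=
  (α_ B A A).hom ≫ (B ◁ mA) ≫ f₂ = (f₂ ▷ A) ≫ f₂

/-- The standing assumptions on the class `Q` of regular epimorphisms. -/
structure QData (C : Type u) [Category.{v} C] [MonoidalCategory C] where
  Q : MorphismProperty C
  regEpi : ∀ ⦃X Y : C⦄ (f : X ⟶ Y), Q f → Nonempty (RegularEpi f)
  comp_mem : ∀ ⦃X Y Z : C⦄ (f : X ⟶ Y) (g : Y ⟶ Z), Q f → Q g → Q (f ≫ g)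
  tensor_mem : ∀ ⦃X Y X' Y' : C⦄ (f : X ⟶ Y) (g : X' ⟶ Y'), Q f → Q g → Q (f ⊗ₘ g)
  iso_mem : ∀ ⦃X Y : C⦄ (f : X ⟶ Y), IsIso f → Q f
  cancel : ∀ ⦃X Y Z : C⦄ (s : X ⟶ Y) (t : Y ⟶ Z), Q s → Q (s ≫ t) → Q t
  coeq : ∀ ⦃X Y : C⦄ (f : X ⟶ Y), Q f →
    ∃ (Z : C) (u v : Z ⟶ X) (h : u ≫ f = v ≫ f),
      Nonempty (IsColimit (Cofork.ofπ f h)) ∧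
      (∀ W : C, Nonempty (IsColimit (Cofork.ofπ (f := W ◁ u) (g := W ◁ v) (W ◁ f)
        (by rw [← MonoidalCategory.whiskerLeft_comp, ← MonoidalCategory.whiskerLeft_comp, h])))) ∧
      (∀ W : C, Nonempty (IsColimit (Cofork.ofπ (f := u ▷ W) (g := v ▷ W) (f ▷ W)
        (by rw [← MonoidalCategory.comp_whiskerRight, ← MonoidalCategory.comp_whiskerRight, h]))))

/-- An object of the category `ℳ`: a non-degenerate semigroup with multiplication in `Q`. -/
structure MObj {C : Type u} [Category.{v} C] [MonoidalCategory C] (QD : QData C) where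
  A : C
  m : A ⊗ A ⟶ A
  assoc : SgAssoc A m
  nondeg : NonDeg A m
  mQ : QD.Q m

/-- A morphism of the category `ℳ`: a dense multiplicative `𝕄`-morphism. -/
@[ext]
structure MHom {C : Type u} [Category.{v} C] [MonoidalCategory C] {QD : QData C}
    (X Y : MObj QD) where
  f₁ : X.A ⊗ Y.A ⟶ Y.A
  f₂ : Y.A ⊗ X.A ⟶ Y.A
  compat : IsMMor Y.m f₁ f₂
  mult₁ : Mult₁ X.m f₁
  mult₂ : Mult₂ X.m f₂
  dense₁ : QD.Q f₁
  dense₂ : QD.Q f₂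

/-- The identity `𝕄`-morphism `i = (m, m)`. -/
def MObj.idM {QD : QData C} (X : MObj QD) : MHom X X where
  f₁ := X.m
  f₂ := X.m
  compat := X.assoc
  mult₁ := X.assoc
  mult₂ := X.assoc.symm
  dense₁ := X.mQ
  dense₂ := X.mQ

/-- The monoidal unit with its trivial multiplication, as an object of `ℳ`. -/
def MObj.unit (QD : QData C) : MObj QD where
  A := 𝟙_ C
  m := (λ_ (𝟙_ C)).hom
  assoc := by
    dsimp [SgAssoc]
    monoidal
  nondeg := by
    constructor
    · intro X Y f g h
      have h' : f ▷ 𝟙_ C = g ▷ 𝟙_ C := by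
        have this := h
        dsimp at this
        simp only [← Category.assoc] at this
        rw [cancel_mono] at this
        rwa [cancel_mono] at this
      rwa [MonoidalCategory.whiskerRight_id, MonoidalCategory.whiskerRight_id,
        cancel_epi, cancel_mono] at h'
    · intro X Y f g h
      have h' : 𝟙_ C ◁ f = 𝟙_ C ◁ g := by
        have this := h
        dsimp at this
        simp only [← Category.assoc] at this
        rw [cancel_mono] at this
        rwa [cancel_mono] at this
      rwa [MonoidalCategory.id_whiskerLeft, MonoidalCategory.id_whiskerLeft,
        cancel_epi, cancel_mono] at h'
  mQ := QD.iso_mem _ inferInstance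

/-!
In element notation, non-degeneracy of `m` says that `p` is determined by the products `a · p`
(and by `p · a`). Hence `f` is determined by `f^#`, and `f` is multiplicative as soon as its
first component `(a, b) ↦ f a · b` is; the remaining equations for `f^#` are instances of
associativity.

For fullness on isomorphisms, let `h : X ⇸ Y` and `k : Y ⇸ X` be mutually inverse. The equation
`h ∙ k = i_Y` gives `b · h₁(x, y) = h₂(b, k₂(x, y))`, so by non-degeneracy `h₁` coequalises
every pair coequalised by the regular epimorphism `k₂`, and `h₁ = f ∘ k₂` for a unique `f`.
Linearity of `h₁` and multiplicativity of `k₂` then give `h = f^#` and make `f` a semigroup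
morphism; the map obtained symmetrically from `k` is its inverse.
-/

lemma NonDeg.eq_of_whiskerLeft_comp_eq {A : C} {m : A ⊗ A ⟶ A} (hnd : NonDeg A m) {Z : C}
    {p q : Z ⟶ A} (hpq : (A ◁ p) ≫ m = (A ◁ q) ≫ m) : p = q := by
  have key (r : Z ⟶ A) : (A ◁ (r ≫ (ρ_ A).inv)) ≫ (α_ A A (𝟙_ C)).inv ≫ (m ▷ 𝟙_ C) =
      ((A ◁ r) ≫ m) ≫ (ρ_ A).inv := by
    monoidal
  rw [← cancel_mono (ρ_ A).inv]
  exact hnd.2 Z (𝟙_ C) (by dsimp only; rw [key, key, hpq])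

lemma NonDeg.eq_of_whiskerRight_comp_eq {A : C} {m : A ⊗ A ⟶ A} (hnd : NonDeg A m) {Z : C}
    {p q : Z ⟶ A} (hpq : (p ▷ A) ≫ m = (q ▷ A) ≫ m) : p = q := by
  have key (r : Z ⟶ A) : ((r ≫ (λ_ A).inv) ▷ A) ≫ (α_ (𝟙_ C) A A).hom ≫ (𝟙_ C ◁ m) =
      ((r ▷ A) ≫ m) ≫ (λ_ A).inv := by
    monoidal
  rw [← cancel_mono (λ_ A).inv]
  exact hnd.1 Z (𝟙_ C) (by dsimp only; rw [key, key, hpq])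

lemma IsMMor.fst_rightLinear {A B : C} {m : B ⊗ B ⟶ B} (hnd : NonDeg B m) (hm : SgAssoc B m)
    {f₁ : A ⊗ B ⟶ B} {f₂ : B ⊗ A ⟶ B} (hf : IsMMor m f₁ f₂) :
    (f₁ ▷ B) ≫ m = (α_ A B B).hom ≫ (A ◁ m) ≫ f₁ := by
  -- `b · (f₁(a, b') · b'') = (f₂(b, a) · b') · b'' = b · f₁(a, b' · b'')`, then cancel `b`
  apply hnd.eq_of_whiskerLeft_comp_eq
  calc _ = (α_ B (A ⊗ B) B).inv ≫ (((B ◁ f₁) ≫ m) ▷ B) ≫ m := by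
        rw [comp_whiskerRight_assoc, hm]
        monoidal
    _ = (α_ B (A ⊗ B) B).inv ≫ ((α_ B A B).inv ▷ B) ≫ (((f₂ ▷ B) ≫ m) ▷ B) ≫ m := by
        rw [hf]
        monoidal
    _ = (B ◁ (α_ A B B).hom) ≫ (α_ B A (B ⊗ B)).inv ≫ ((B ⊗ A) ◁ m) ≫ (f₂ ▷ B) ≫ m := by
        rw [whisker_exchange_assoc, comp_whiskerRight_assoc, hm]
        monoidal
    _ = _ := by
        rw [hf]
        monoidal

section Sharp

variable {A B D : C} {m : A ⊗ A ⟶ A} {n : B ⊗ B ⟶ B} {p : D ⊗ D ⟶ D}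

lemma isMMor_sharp (hn : SgAssoc B n) (f : A ⟶ B) :
    IsMMor n ((f ▷ B) ≫ n) ((B ◁ f) ≫ n) := by
  rw [IsMMor, comp_whiskerRight_assoc, hn]
  monoidal

lemma mult₁_sharp_iff (hnd : NonDeg B n) (hn : SgAssoc B n) {f : A ⟶ B} :
    Mult₁ m ((f ▷ B) ≫ n) ↔ (f ⊗ₘ f) ≫ n = m ≫ f := by
  have hsq : (α_ A A B).hom ≫ (A ◁ ((f ▷ B) ≫ n)) ≫ (f ▷ B) ≫ n =
      (((f ⊗ₘ f) ≫ n) ▷ B) ≫ n := by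
    rw [comp_whiskerRight_assoc, hn, whiskerLeft_comp_assoc, whisker_exchange_assoc,
      MonoidalCategory.tensorHom_def']
    monoidal
  rw [Mult₁, hsq, ← comp_whiskerRight_assoc]
  exact ⟨fun h => (hnd.eq_of_whiskerRight_comp_eq h).symm, fun h => by rw [h]⟩

lemma mult₂_sharp (hn : SgAssoc B n) {f : A ⟶ B} (hf : (f ⊗ₘ f) ≫ n = m ≫ f) :
    Mult₂ m ((B ◁ f) ≫ n) := by
  rw [Mult₂, ← whiskerLeft_comp_assoc, ← hf, whiskerLeft_comp_assoc, comp_whiskerRight_assoc,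
    ← whisker_exchange_assoc, hn, MonoidalCategory.tensorHom_def]
  monoidal

lemma sharp_comp_fst (hp : SgAssoc D p) (f : A ⟶ B) {g : B ⟶ D} (hg : (g ⊗ₘ g) ≫ p = n ≫ g) :
    (α_ A B D).hom ≫ (A ◁ ((g ▷ D) ≫ p)) ≫ (((f ≫ g) ▷ D) ≫ p) =
      (((f ▷ B) ≫ n) ▷ D) ≫ ((g ▷ D) ≫ p) := by
  have hfg : ((f ≫ g) ⊗ₘ g) ≫ p = (f ▷ B) ≫ n ≫ g := by
    rw [← hg, ← tensorHom_id, tensorHom_comp_tensorHom_assoc, id_comp]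
  calc _ = (α_ A B D).hom ≫ (A ◁ (g ▷ D)) ≫ ((f ≫ g) ▷ (D ⊗ D)) ≫ (D ◁ p) ≫ p := by
        rw [whiskerLeft_comp_assoc, whisker_exchange_assoc]
    _ = (((f ≫ g) ⊗ₘ g) ▷ D) ≫ (α_ D D D).hom ≫ (D ◁ p) ≫ p := by
        rw [MonoidalCategory.tensorHom_def']
        monoidal
    _ = _ := by
        rw [← hp, ← comp_whiskerRight_assoc, hfg]
        simp only [comp_whiskerRight, assoc]

lemma sharp_comp_snd (hp : SgAssoc D p) (f : A ⟶ B) {g : B ⟶ D} (hg : (g ⊗ₘ g) ≫ p = n ≫ g) :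
    (((D ◁ g) ≫ p) ▷ A) ≫ ((D ◁ (f ≫ g)) ≫ p) =
      (α_ D B A).hom ≫ (D ◁ ((B ◁ f) ≫ n)) ≫ ((D ◁ g) ≫ p) := by
  have hgf : (g ⊗ₘ (f ≫ g)) ≫ p = (B ◁ f) ≫ n ≫ g := by
    rw [← hg, ← id_tensorHom, tensorHom_comp_tensorHom_assoc, id_comp]
  calc _ = ((D ◁ g) ▷ A) ≫ ((D ⊗ D) ◁ (f ≫ g)) ≫ (p ▷ D) ≫ p := by
        rw [comp_whiskerRight_assoc, whisker_exchange_assoc]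
    _ = (α_ D B A).hom ≫ (D ◁ (g ⊗ₘ (f ≫ g))) ≫ (D ◁ p) ≫ p := by
        rw [hp, MonoidalCategory.tensorHom_def]
        monoidal
    _ = _ := by
        rw [← whiskerLeft_comp_assoc, hgf]
        simp only [whiskerLeft_comp, assoc]

end Sharp

namespace QData

variable (QD : QData C)

lemma effectiveEpi {X Y : C} {f : X ⟶ Y} (hf : QD.Q f) : EffectiveEpi f :=
  (QD.regEpi f hf).some.effectiveEpi

lemma epi {X Y : C} {f : X ⟶ Y} (hf : QD.Q f) : Epi f :=
  have := QD.effectiveEpi hf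
  inferInstance

lemma whiskerLeft_mem (W : C) {X Y : C} {f : X ⟶ Y} (hf : QD.Q f) : QD.Q (W ◁ f) := by
  simpa using QD.tensor_mem (𝟙 W) f (QD.iso_mem _ inferInstance) hf

lemma whiskerRight_mem {X Y : C} {f : X ⟶ Y} (hf : QD.Q f) (W : C) : QD.Q (f ▷ W) := by
  simpa using QD.tensor_mem f (𝟙 W) hf (QD.iso_mem _ inferInstance)

variable {A B D : C} {n : B ⊗ B ⟶ B} {p : D ⊗ D ⟶ D}

lemma sharp_comp_fst_mem (hp : SgAssoc D p) {f : A ⟶ B} {g : B ⟶ D}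
    (hg : (g ⊗ₘ g) ≫ p = n ≫ g) (hf₁ : QD.Q ((f ▷ B) ≫ n)) (hg₁ : QD.Q ((g ▷ D) ≫ p)) :
    QD.Q (((f ≫ g) ▷ D) ≫ p) := by
  refine QD.cancel ((α_ A B D).hom ≫ (A ◁ ((g ▷ D) ≫ p))) _
    (QD.comp_mem _ _ (QD.iso_mem _ inferInstance) (QD.whiskerLeft_mem _ hg₁)) ?_
  rw [assoc, sharp_comp_fst hp f hg]
  exact QD.comp_mem _ _ (QD.whiskerRight_mem hf₁ _) hg₁

lemma sharp_comp_snd_mem (hp : SgAssoc D p) {f : A ⟶ B} {g : B ⟶ D}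
    (hg : (g ⊗ₘ g) ≫ p = n ≫ g) (hf₂ : QD.Q ((B ◁ f) ≫ n)) (hg₂ : QD.Q ((D ◁ g) ≫ p)) :
    QD.Q ((D ◁ (f ≫ g)) ≫ p) := by
  refine QD.cancel (((D ◁ g) ≫ p) ▷ A) _ (QD.whiskerRight_mem hg₂ _) ?_
  rw [sharp_comp_snd hp f hg]
  exact QD.comp_mem _ _ (QD.iso_mem _ inferInstance)
    (QD.comp_mem _ _ (QD.whiskerLeft_mem _ hf₂) hg₂)

end QData

namespace MHom

variable {QD : QData C} {X Y : MObj QD} (h : MHom X Y) (k : MHom Y X)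

lemma whiskerLeft_fst_comp_eq
    (hhk₂ : (h.f₂ ▷ Y.A) ≫ Y.m = (α_ Y.A X.A Y.A).hom ≫ (Y.A ◁ k.f₂) ≫ h.f₂) :
    (Y.A ◁ h.f₁) ≫ Y.m = (Y.A ◁ k.f₂) ≫ h.f₂ := by
  rw [← cancel_epi (α_ Y.A X.A Y.A).hom, ← hhk₂, h.compat]

lemma comp_fst_eq_of_comp_snd_eq
    (hhk₂ : (h.f₂ ▷ Y.A) ≫ Y.m = (α_ Y.A X.A Y.A).hom ≫ (Y.A ◁ k.f₂) ≫ h.f₂) {Z : C}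
    (g₁ g₂ : Z ⟶ X.A ⊗ Y.A) (hg : g₁ ≫ k.f₂ = g₂ ≫ k.f₂) : g₁ ≫ h.f₁ = g₂ ≫ h.f₁ := by
  apply Y.nondeg.eq_of_whiskerLeft_comp_eq
  rw [whiskerLeft_comp_assoc, whiskerLeft_comp_assoc, h.whiskerLeft_fst_comp_eq k hhk₂,
    ← whiskerLeft_comp_assoc, hg, whiskerLeft_comp_assoc]

/-- The semigroup morphism `f` with `f^# = h`. -/
noncomputable def flat
    (hhk₂ : (h.f₂ ▷ Y.A) ≫ Y.m = (α_ Y.A X.A Y.A).hom ≫ (Y.A ◁ k.f₂) ≫ h.f₂) : X.A ⟶ Y.A :=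
  have := QD.effectiveEpi k.dense₂
  EffectiveEpi.desc k.f₂ h.f₁ (h.comp_fst_eq_of_comp_snd_eq k hhk₂)

variable {h k} (hhk₂ : (h.f₂ ▷ Y.A) ≫ Y.m = (α_ Y.A X.A Y.A).hom ≫ (Y.A ◁ k.f₂) ≫ h.f₂)

lemma flat_fac : k.f₂ ≫ h.flat k hhk₂ = h.f₁ :=
  have := QD.effectiveEpi k.dense₂
  EffectiveEpi.fac k.f₂ h.f₁ (h.comp_fst_eq_of_comp_snd_eq k hhk₂)

lemma whiskerRight_flat_comp : (h.flat k hhk₂ ▷ Y.A) ≫ Y.m = h.f₁ := by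
  have := QD.epi (QD.whiskerRight_mem k.dense₂ Y.A)
  rw [← cancel_epi (k.f₂ ▷ Y.A)]
  calc (k.f₂ ▷ Y.A) ≫ (h.flat k hhk₂ ▷ Y.A) ≫ Y.m = (h.f₁ ▷ Y.A) ≫ Y.m := by
        rw [← comp_whiskerRight_assoc, flat_fac]
    _ = (α_ X.A Y.A Y.A).hom ≫ (X.A ◁ Y.m) ≫ k.f₂ ≫ h.flat k hhk₂ := by
        rw [h.compat.fst_rightLinear Y.nondeg Y.assoc, flat_fac]
    _ = (k.f₂ ▷ Y.A) ≫ h.f₁ := by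
        rw [reassoc_of% k.mult₂, flat_fac]

lemma whiskerLeft_flat_comp : (Y.A ◁ h.flat k hhk₂) ≫ Y.m = h.f₂ := by
  have := QD.epi (QD.whiskerLeft_mem Y.A k.dense₂)
  rw [← cancel_epi (Y.A ◁ k.f₂), ← whiskerLeft_comp_assoc, flat_fac,
    h.whiskerLeft_fst_comp_eq k hhk₂]

lemma flat_mul : (h.flat k hhk₂ ⊗ₘ h.flat k hhk₂) ≫ Y.m = X.m ≫ h.flat k hhk₂ :=
  (mult₁_sharp_iff Y.nondeg Y.assoc).1 (by rw [whiskerRight_flat_comp]; exact h.mult₁)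

lemma whiskerRight_flat_comp_fst
    (hkh₁ : (α_ X.A Y.A X.A).hom ≫ (X.A ◁ k.f₁) ≫ X.m = (h.f₁ ▷ X.A) ≫ k.f₁)
    (hkh₂ : (k.f₂ ▷ X.A) ≫ X.m = (α_ X.A Y.A X.A).hom ≫ (X.A ◁ h.f₂) ≫ k.f₂) :
    (h.flat k hhk₂ ▷ X.A) ≫ k.f₁ = X.m := by
  have := QD.epi (QD.whiskerRight_mem k.dense₂ X.A)
  rw [← cancel_epi (k.f₂ ▷ X.A), ← comp_whiskerRight_assoc, flat_fac, ← hkh₁,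
    k.whiskerLeft_fst_comp_eq h hkh₂, hkh₂]

lemma flat_comp_flat
    (hkh₁ : (α_ X.A Y.A X.A).hom ≫ (X.A ◁ k.f₁) ≫ X.m = (h.f₁ ▷ X.A) ≫ k.f₁)
    (hkh₂ : (k.f₂ ▷ X.A) ≫ X.m = (α_ X.A Y.A X.A).hom ≫ (X.A ◁ h.f₂) ≫ k.f₂) :
    h.flat k hhk₂ ≫ k.flat h hkh₂ = 𝟙 X.A := by
  apply X.nondeg.eq_of_whiskerRight_comp_eq
  rw [comp_whiskerRight_assoc, whiskerRight_flat_comp, whiskerRight_flat_comp_fst hhk₂ hkh₁ hkh₂,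
    id_whiskerRight, id_comp]

end MHom

/-- Proposition 3.7: the semigroup morphisms `f` whose induced `𝕄`-morphism
`f^# = (m ∘ (f ⊗ 1), m ∘ (1 ⊗ f))` has components in `Q` form a subcategory `𝒟` of the
category of semigroups; `f ↦ f^#` is a faithful identity-on-objects functor `𝒟 ⟶ ℳ`
which is full on isomorphisms. -/
theorem subcategory_D_and_sharp_functor (QD : QData C) :
    -- identities lie in 𝒟
    (∀ X : MObj QD,
      ((𝟙 X.A ⊗ₘ 𝟙 X.A) ≫ X.m = X.m ≫ 𝟙 X.A) ∧
      QD.Q ((𝟙 X.A ▷ X.A) ≫ X.m) ∧ QD.Q ((X.A ◁ 𝟙 X.A) ≫ X.m)) ∧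
    -- 𝒟 is closed under composition
    (∀ (X Y Z : MObj QD) (f : X.A ⟶ Y.A) (g : Y.A ⟶ Z.A),
      (f ⊗ₘ f) ≫ Y.m = X.m ≫ f → QD.Q ((f ▷ Y.A) ≫ Y.m) → QD.Q ((Y.A ◁ f) ≫ Y.m) →
      (g ⊗ₘ g) ≫ Z.m = Y.m ≫ g → QD.Q ((g ▷ Z.A) ≫ Z.m) → QD.Q ((Z.A ◁ g) ≫ Z.m) →
      ((f ≫ g) ⊗ₘ (f ≫ g)) ≫ Z.m = X.m ≫ (f ≫ g) ∧
      QD.Q (((f ≫ g) ▷ Z.A) ≫ Z.m) ∧ QD.Q ((Z.A ◁ (f ≫ g)) ≫ Z.m)) ∧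
    -- `f^#` is a morphism of ℳ
    (∀ (X Y : MObj QD) (f : X.A ⟶ Y.A),
      (f ⊗ₘ f) ≫ Y.m = X.m ≫ f → QD.Q ((f ▷ Y.A) ≫ Y.m) → QD.Q ((Y.A ◁ f) ≫ Y.m) →
      IsMMor Y.m ((f ▷ Y.A) ≫ Y.m) ((Y.A ◁ f) ≫ Y.m) ∧
      Mult₁ X.m ((f ▷ Y.A) ≫ Y.m) ∧ Mult₂ X.m ((Y.A ◁ f) ≫ Y.m)) ∧
    -- `(f ≫ g)^#` satisfies the defining equations of the composite `g^# ∙ f^#`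
    (∀ (X Y Z : MObj QD) (f : X.A ⟶ Y.A) (g : Y.A ⟶ Z.A),
      (f ⊗ₘ f) ≫ Y.m = X.m ≫ f → (g ⊗ₘ g) ≫ Z.m = Y.m ≫ g →
      ((α_ X.A Y.A Z.A).hom ≫ (X.A ◁ ((g ▷ Z.A) ≫ Z.m)) ≫ (((f ≫ g) ▷ Z.A) ≫ Z.m) =
        (((f ▷ Y.A) ≫ Y.m) ▷ Z.A) ≫ ((g ▷ Z.A) ≫ Z.m)) ∧
      ((((Z.A ◁ g) ≫ Z.m) ▷ X.A) ≫ ((Z.A ◁ (f ≫ g)) ≫ Z.m) =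
        (α_ Z.A Y.A X.A).hom ≫ (Z.A ◁ ((Y.A ◁ f) ≫ Y.m)) ≫ ((Z.A ◁ g) ≫ Z.m))) ∧
    -- faithfulness
    (∀ (X Y : MObj QD) (f g : X.A ⟶ Y.A),
      (f ▷ Y.A) ≫ Y.m = (g ▷ Y.A) ≫ Y.m → (Y.A ◁ f) ≫ Y.m = (Y.A ◁ g) ≫ Y.m →
      f = g) ∧
    -- fullness on isomorphisms
    (∀ (X Y : MObj QD) (h : MHom X Y) (k : MHom Y X),
      -- `h ∙ k = i_Y` and `k ∙ h = i_X`
      ((α_ Y.A X.A Y.A).hom ≫ (Y.A ◁ h.f₁) ≫ Y.m = (k.f₁ ▷ Y.A) ≫ h.f₁) →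
      ((h.f₂ ▷ Y.A) ≫ Y.m = (α_ Y.A X.A Y.A).hom ≫ (Y.A ◁ k.f₂) ≫ h.f₂) →
      ((α_ X.A Y.A X.A).hom ≫ (X.A ◁ k.f₁) ≫ X.m = (h.f₁ ▷ X.A) ≫ k.f₁) →
      ((k.f₂ ▷ X.A) ≫ X.m = (α_ X.A Y.A X.A).hom ≫ (X.A ◁ h.f₂) ≫ k.f₂) →
      ∃ f : X.A ⟶ Y.A, IsIso f ∧ (f ⊗ₘ f) ≫ Y.m = X.m ≫ f ∧
        (f ▷ Y.A) ≫ Y.m = h.f₁ ∧ (Y.A ◁ f) ≫ Y.m = h.f₂) := by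
  refine ⟨fun X => ⟨by simp, by simpa using X.mQ, by simpa using X.mQ⟩, ?_, ?_, ?_, ?_, ?_⟩
  · intro X Y Z f g hf hf₁ hf₂ hg hg₁ hg₂
    refine ⟨?_, QD.sharp_comp_fst_mem Z.assoc hg hf₁ hg₁, QD.sharp_comp_snd_mem Z.assoc hg hf₂ hg₂⟩
    rw [← tensorHom_comp_tensorHom, assoc, hg, reassoc_of% hf]
  · intro X Y f hf _ _
    exact ⟨isMMor_sharp Y.assoc f, (mult₁_sharp_iff Y.nondeg Y.assoc).2 hf, mult₂_sharp Y.assoc hf⟩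
  · intro X Y Z f g _ hg
    exact ⟨sharp_comp_fst Z.assoc f hg, sharp_comp_snd Z.assoc f hg⟩
  · intro X Y f g hfg _
    exact Y.nondeg.eq_of_whiskerRight_comp_eq hfg
  · intro X Y h k hhk₁ hhk₂ hkh₁ hkh₂
    exact ⟨h.flat k hhk₂,
      ⟨k.flat h hkh₂, MHom.flat_comp_flat hhk₂ hkh₁ hkh₂, MHom.flat_comp_flat hkh₂ hhk₁ hhk₂⟩,
      MHom.flat_mul hhk₂, MHom.whiskerRight_flat_comp hhk₂, MHom.whiskerLeft_flat_comp hhk₂⟩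
end

section
/- In a braided monoidal category, if semigroups A and B have non-degenerate multiplications, then the tensor product semigroup A⊗B, with multiplication (m_A⊗m_B)∘(1⊗c_{B,A}⊗1) : (A⊗B)⊗(A⊗B) → A⊗B, also has non-degenerate multiplication. -/
open CategoryTheory Category MonoidalCategory Limits

universe v u

variable {C : Type u} [Category.{v} C] [MonoidalCategory C]

/-!
Write `f ↦ (1 ⊗ m)(f ⊗ 1)` and `g ↦ (m ⊗ 1)(1 ⊗ g)` for the two translation maps of a
multiplication `m`. Moving the multiplication of one factor across the braiding `c_{B,A}`
(naturality plus one hexagon) shows that each translation map of `A ⊗ B` is, up to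
composition with isomorphisms, the translation map of one factor applied after that of the
other. Composites of injective maps are injective, and composing with isomorphisms is
injective, so `A ⊗ B` is non-degenerate.
-/

section

open BraidedCategory

variable {A : C}

def rightMul (m : A ⊗ A ⟶ A) (X Y : C) (f : X ⟶ Y ⊗ A) : X ⊗ A ⟶ Y ⊗ A :=
  (f ▷ A) ≫ (α_ Y A A).hom ≫ (Y ◁ m)

def leftMul (m : A ⊗ A ⟶ A) (X Y : C) (g : X ⟶ A ⊗ Y) : A ⊗ X ⟶ A ⊗ Y :=
  (A ◁ g) ≫ (α_ A A Y).inv ≫ (m ▷ Y)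

theorem nonDeg_iff (m : A ⊗ A ⟶ A) :
    NonDeg A m ↔ (∀ X Y : C, Function.Injective (rightMul m X Y)) ∧
      ∀ X Y : C, Function.Injective (leftMul m X Y) :=
  Iff.rfl

variable [BraidedCategory C]

theorem braiding_inv_whiskerRight_whiskerLeft_braiding {A₁ A₂ A' : C} (m : A₁ ⊗ A₂ ⟶ A')
    (B : C) :
    ((β_ B A₁).inv ▷ A₂) ≫ (α_ B A₁ A₂).hom ≫ (B ◁ m) ≫ (β_ B A').hom =
      (α_ A₁ B A₂).hom ≫ (A₁ ◁ (β_ B A₂).hom) ≫ (α_ A₁ A₂ B).inv ≫ (m ▷ B) := by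
  rw [braiding_naturality_right, braiding_tensor_right_hom]
  simp

theorem whiskerLeft_braiding_inv_whiskerRight_braiding {B₁ B₂ B' : C} (m : B₁ ⊗ B₂ ⟶ B')
    (A : C) :
    (B₁ ◁ (β_ B₂ A).inv) ≫ (α_ B₁ B₂ A).inv ≫ (m ▷ A) ≫ (β_ B' A).hom =
      (α_ B₁ A B₂).inv ≫ ((β_ B₁ A).hom ▷ B₂) ≫ (α_ A B₁ B₂).hom ≫ (A ◁ m) := by
  rw [braiding_naturality_left, braiding_tensor_left_hom]
  simp

variable {B : C}

theorem rightMul_tensorμ_comp (mA : A ⊗ A ⟶ A) (mB : B ⊗ B ⟶ B) (X Y : C)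
    (f : X ⟶ Y ⊗ (A ⊗ B)) :
    rightMul (tensorμ A B A B ≫ (mA ⊗ₘ mB)) X Y f =
      (α_ X A B).inv ≫
        rightMul mB (X ⊗ A) (Y ⊗ A)
          (rightMul mA X (Y ⊗ B) (f ≫ (Y ◁ (β_ B A).inv) ≫ (α_ Y B A).inv) ≫
            (α_ Y B A).hom ≫ (Y ◁ (β_ B A).hom) ≫ (α_ Y A B).inv) ≫
        (α_ Y A B).hom := by
  calc _ = (α_ X A B).inv ≫
        ((((f ▷ A) ≫ (α_ Y (A ⊗ B) A).hom ≫
          (Y ◁ (((β_ B A).inv ▷ A) ≫ (α_ B A A).hom ≫ (B ◁ mA) ≫ (β_ B A).hom)) ≫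
          (α_ Y A B).inv) ▷ B) ≫ (α_ (Y ⊗ A) B B).hom ≫ ((Y ⊗ A) ◁ mB)) ≫ (α_ Y A B).hom := by
        rw [braiding_inv_whiskerRight_whiskerLeft_braiding]
        simp only [rightMul, tensorμ, MonoidalCategory.tensorHom_def]
        monoidal
    _ = _ := by simp only [rightMul]; monoidal

theorem leftMul_tensorμ_comp (mA : A ⊗ A ⟶ A) (mB : B ⊗ B ⟶ B) (X Y : C)
    (g : X ⟶ (A ⊗ B) ⊗ Y) :
    leftMul (tensorμ A B A B ≫ (mA ⊗ₘ mB)) X Y g =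
      (α_ A B X).hom ≫
        leftMul mA (B ⊗ X) (B ⊗ Y)
          (leftMul mB X (A ⊗ Y) (g ≫ ((β_ B A).inv ▷ Y) ≫ (α_ B A Y).hom) ≫
            (α_ B A Y).inv ≫ ((β_ B A).hom ▷ Y) ≫ (α_ A B Y).hom) ≫
        (α_ A B Y).inv := by
  calc _ = (α_ A B X).hom ≫
        ((A ◁ ((B ◁ g) ≫ (α_ B (A ⊗ B) Y).inv ≫
          (((B ◁ (β_ B A).inv) ≫ (α_ B B A).inv ≫ (mB ▷ A) ≫ (β_ B A).hom) ▷ Y) ≫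
          (α_ A B Y).hom)) ≫ (α_ A A (B ⊗ Y)).inv ≫ (mA ▷ (B ⊗ Y))) ≫ (α_ A B Y).inv := by
        rw [whiskerLeft_braiding_inv_whiskerRight_braiding]
        simp only [leftMul, tensorμ, MonoidalCategory.tensorHom_def']
        monoidal
    _ = _ := by simp only [leftMul]; monoidal

end

/-- Proposition 4.1: the monoidal product of non-degenerate semigroups,
with multiplication `(m_A ⊗ m_B) ∘ (1 ⊗ c ⊗ 1)`, is non-degenerate. -/
theorem tensor_nondeg [BraidedCategory C] {A B : C} (mA : A ⊗ A ⟶ A) (mB : B ⊗ B ⟶ B)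
    (hA : NonDeg A mA) (hB : NonDeg B mB) :
    NonDeg (A ⊗ B) (tensorμ A B A B ≫ (mA ⊗ₘ mB)) := by
  rw [nonDeg_iff] at hA hB ⊢
  refine ⟨fun X Y f g hfg => ?_, fun X Y f g hfg => ?_⟩
  · rw [rightMul_tensorμ_comp, rightMul_tensorμ_comp, cancel_epi, cancel_mono] at hfg
    exact (cancel_mono _).1 (hA.1 _ _ ((cancel_mono _).1 (hB.1 _ _ hfg)))
  · rw [leftMul_tensorμ_comp, leftMul_tensorμ_comp, cancel_epi, cancel_mono] at hfg
    exact (cancel_mono _).1 (hB.2 _ _ ((cancel_mono _).1 (hA.2 _ _ hfg)))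
end

section
/- If f : A ⇸ B and f' : A' ⇸ B' are M-morphisms in a braided monoidal category, then the pair of morphisms (f₁⊗f'₁)∘(1⊗c_{A',B}⊗1) : A⊗A'⊗B⊗B' → B⊗B' and (f₂⊗f'₂)∘(1⊗c_{B',A}⊗1) : B⊗B'⊗A⊗A' → B⊗B' defines an M-morphism A⊗A' ⇸ B⊗B' (with respect to the tensor product semigroup structures), which is multiplicative if f and f' are multiplicative, and dense if f and f' are dense. -/
open CategoryTheory Category MonoidalCategory Limits

universe v u

variable {C : Type u} [Category.{v} C] [MonoidalCategory C]

/-!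
The three compatibility conditions (being an `𝕄`-morphism, and multiplicativity of either
component) are all mixed associativity laws `w ∘ (u ⊗ 1) = s ∘ (1 ⊗ v) ∘ α` between four binary
operations. Such a law is preserved by the componentwise product `(u₁ ⊗ u₂) ∘ (1 ⊗ c ⊗ 1)`,
because `tensorμ` is natural and compatible with the associator. Density is preserved because
`tensorμ` is an isomorphism and `Q` is closed under `⊗` and `≫`.
-/

abbrev MixedAssoc {X Y Z U V T : C} (u : X ⊗ Y ⟶ U) (v : Y ⊗ Z ⟶ V) (w : U ⊗ Z ⟶ T)
    (s : X ⊗ V ⟶ T) : Prop :=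
  (u ▷ Z) ≫ w = (α_ X Y Z).hom ≫ (X ◁ v) ≫ s

section Braided

variable [BraidedCategory C]

instance isIso_tensorμ (X₁ X₂ Y₁ Y₂ : C) : IsIso (tensorμ X₁ X₂ Y₁ Y₂) :=
  ⟨tensorδ X₁ X₂ Y₁ Y₂, tensorμ_tensorδ X₁ X₂ Y₁ Y₂, tensorδ_tensorμ X₁ X₂ Y₁ Y₂⟩

abbrev opTensor {X₁ X₂ Y₁ Y₂ U₁ U₂ : C} (u₁ : X₁ ⊗ Y₁ ⟶ U₁) (u₂ : X₂ ⊗ Y₂ ⟶ U₂) :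
    (X₁ ⊗ X₂) ⊗ (Y₁ ⊗ Y₂) ⟶ U₁ ⊗ U₂ :=
  tensorμ X₁ X₂ Y₁ Y₂ ≫ (u₁ ⊗ₘ u₂)

theorem MixedAssoc.opTensor {X₁ X₂ Y₁ Y₂ Z₁ Z₂ U₁ U₂ V₁ V₂ T₁ T₂ : C}
    {u₁ : X₁ ⊗ Y₁ ⟶ U₁} {u₂ : X₂ ⊗ Y₂ ⟶ U₂} {v₁ : Y₁ ⊗ Z₁ ⟶ V₁} {v₂ : Y₂ ⊗ Z₂ ⟶ V₂}
    {w₁ : U₁ ⊗ Z₁ ⟶ T₁} {w₂ : U₂ ⊗ Z₂ ⟶ T₂} {s₁ : X₁ ⊗ V₁ ⟶ T₁} {s₂ : X₂ ⊗ V₂ ⟶ T₂}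
    (h₁ : MixedAssoc u₁ v₁ w₁ s₁) (h₂ : MixedAssoc u₂ v₂ w₂ s₂) :
    MixedAssoc (opTensor u₁ u₂) (opTensor v₁ v₂) (opTensor w₁ w₂) (opTensor s₁ s₂) :=
  calc _ = (tensorμ X₁ X₂ Y₁ Y₂ ▷ (Z₁ ⊗ Z₂)) ≫ tensorμ (X₁ ⊗ Y₁) (X₂ ⊗ Y₂) Z₁ Z₂ ≫
          (((u₁ ▷ Z₁) ≫ w₁) ⊗ₘ ((u₂ ▷ Z₂) ≫ w₂)) := by
        rw [comp_whiskerRight, assoc, tensorμ_natural_left_assoc, ← tensorHom_comp_tensorHom]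
    _ = (tensorμ X₁ X₂ Y₁ Y₂ ▷ (Z₁ ⊗ Z₂)) ≫ tensorμ (X₁ ⊗ Y₁) (X₂ ⊗ Y₂) Z₁ Z₂ ≫
          ((α_ X₁ Y₁ Z₁).hom ⊗ₘ (α_ X₂ Y₂ Z₂).hom) ≫
            ((X₁ ◁ v₁) ⊗ₘ (X₂ ◁ v₂)) ≫ (s₁ ⊗ₘ s₂) := by
        rw [h₁, h₂, ← tensorHom_comp_tensorHom, ← tensorHom_comp_tensorHom]
    _ = (α_ (X₁ ⊗ X₂) (Y₁ ⊗ Y₂) (Z₁ ⊗ Z₂)).hom ≫ ((X₁ ⊗ X₂) ◁ tensorμ Y₁ Y₂ Z₁ Z₂) ≫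
          tensorμ X₁ X₂ (Y₁ ⊗ Z₁) (Y₂ ⊗ Z₂) ≫ ((X₁ ◁ v₁) ⊗ₘ (X₂ ◁ v₂)) ≫ (s₁ ⊗ₘ s₂) := by
        rw [← tensor_associativity_assoc]
    _ = _ := by
        rw [MonoidalCategory.whiskerLeft_comp, assoc, tensorμ_natural_right_assoc]

theorem QData.opTensor_mem (QD : QData C) {X₁ X₂ Y₁ Y₂ U₁ U₂ : C}
    {u₁ : X₁ ⊗ Y₁ ⟶ U₁} {u₂ : X₂ ⊗ Y₂ ⟶ U₂} (h₁ : QD.Q u₁) (h₂ : QD.Q u₂) :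
    QD.Q (opTensor u₁ u₂) :=
  QD.comp_mem _ _ (QD.iso_mem _ inferInstance) (QD.tensor_mem _ _ h₁ h₂)

end Braided

theorem tensor_mmor_general [BraidedCategory C] (QD : QData C) {A A' B B' : C}
    (mA : A ⊗ A ⟶ A) (mA' : A' ⊗ A' ⟶ A') (mB : B ⊗ B ⟶ B) (mB' : B' ⊗ B' ⟶ B')
    (f₁ : A ⊗ B ⟶ B) (f₂ : B ⊗ A ⟶ B) (hf : IsMMor mB f₁ f₂)
    (f'₁ : A' ⊗ B' ⟶ B') (f'₂ : B' ⊗ A' ⟶ B') (hf' : IsMMor mB' f'₁ f'₂) :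
    IsMMor (tensorμ B B' B B' ≫ (mB ⊗ₘ mB'))
      (tensorμ A A' B B' ≫ (f₁ ⊗ₘ f'₁)) (tensorμ B B' A A' ≫ (f₂ ⊗ₘ f'₂)) ∧
    (Mult₁ mA f₁ → Mult₂ mA f₂ → Mult₁ mA' f'₁ → Mult₂ mA' f'₂ →
      Mult₁ (tensorμ A A' A A' ≫ (mA ⊗ₘ mA')) (tensorμ A A' B B' ≫ (f₁ ⊗ₘ f'₁)) ∧
      Mult₂ (tensorμ A A' A A' ≫ (mA ⊗ₘ mA')) (tensorμ B B' A A' ≫ (f₂ ⊗ₘ f'₂))) ∧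
    (QD.Q f₁ → QD.Q f₂ → QD.Q f'₁ → QD.Q f'₂ →
      QD.Q (tensorμ A A' B B' ≫ (f₁ ⊗ₘ f'₁)) ∧ QD.Q (tensorμ B B' A A' ≫ (f₂ ⊗ₘ f'₂))) :=
  ⟨MixedAssoc.opTensor hf hf',
    fun h₁ h₂ h'₁ h'₂ =>
      ⟨MixedAssoc.opTensor h₁ h'₁, (MixedAssoc.opTensor h₂.symm h'₂.symm).symm⟩,
    fun q₁ q₂ q'₁ q'₂ => ⟨QD.opTensor_mem q₁ q'₁, QD.opTensor_mem q₂ q'₂⟩⟩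

/-- Proposition 4.2: the monoidal product of `𝕄`-morphisms `f : A ⇸ B`, `f' : A' ⇸ B'`,
with components `(f₁ ⊗ₘ f'₁) ∘ (1 ⊗ c ⊗ 1)` and `(f₂ ⊗ₘ f'₂) ∘ (1 ⊗ c ⊗ 1)`, is an
`𝕄`-morphism `A ⊗ A' ⇸ B ⊗ B'`, multiplicative if `f` and `f'` are multiplicative and
dense if `f` and `f'` are dense. -/
theorem tensor_mmor [BraidedCategory C] (QD : QData C) {A A' B B' : C}
    (mA : A ⊗ A ⟶ A) (mA' : A' ⊗ A' ⟶ A') (mB : B ⊗ B ⟶ B) (mB' : B' ⊗ B' ⟶ B')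
    (hA : SgAssoc A mA) (hA' : SgAssoc A' mA') (hB : SgAssoc B mB) (hB' : SgAssoc B' mB')
    (f₁ : A ⊗ B ⟶ B) (f₂ : B ⊗ A ⟶ B) (hf : IsMMor mB f₁ f₂)
    (f'₁ : A' ⊗ B' ⟶ B') (f'₂ : B' ⊗ A' ⟶ B') (hf' : IsMMor mB' f'₁ f'₂) :
    IsMMor (tensorμ B B' B B' ≫ (mB ⊗ₘ mB'))
      (tensorμ A A' B B' ≫ (f₁ ⊗ₘ f'₁)) (tensorμ B B' A A' ≫ (f₂ ⊗ₘ f'₂)) ∧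
    (Mult₁ mA f₁ → Mult₂ mA f₂ → Mult₁ mA' f'₁ → Mult₂ mA' f'₂ →
      Mult₁ (tensorμ A A' A A' ≫ (mA ⊗ₘ mA')) (tensorμ A A' B B' ≫ (f₁ ⊗ₘ f'₁)) ∧
      Mult₂ (tensorμ A A' A A' ≫ (mA ⊗ₘ mA')) (tensorμ B B' A A' ≫ (f₂ ⊗ₘ f'₂))) ∧
    (QD.Q f₁ → QD.Q f₂ → QD.Q f'₁ → QD.Q f'₂ →
      QD.Q (tensorμ A A' B B' ≫ (f₁ ⊗ₘ f'₁)) ∧ QD.Q (tensorμ B B' A A' ≫ (f₂ ⊗ₘ f'₂))) :=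
  tensor_mmor_general QD mA mA' mB mB' f₁ f₂ hf f'₁ f'₂ hf'
end
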